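/- arXiv:1906.04782 — 2 statements merged into one kernel-verified Lean document; each statement's English description precedes it below -/
import Mathlib

section
/- Let ν ∈ (0,1), let ι be a finite index set with |ι| ≥ 2, and let m : ι → ℝ. Let x₁ be an index maximizing m over ι and x₂ an index maximizing m over ι \ {x₁}. Then ξ(x₂;m) ≥ ξ(x₁;m): the second-best index achieves at least the ξ-value of the best index. -/
/-!
Write `M = m x₁ ≥ N = m x₂`. The runner-up of `x₁` is `x₂` and that of `x₂` is `x₁`, so
`ξ(x₂) = e^M + h e^{(N - νM)/(1-ν)}`. If `N - M < ln ν` then `ξ(x₁) = e^M` and `h > 0` finishes.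
Otherwise, dividing by `e^N` and putting `r = e^{M-N} ∈ [1, 1/ν]`, the claim reads
`h (r^p - r^q) ≤ r - 1` with `p = 1/(1-ν)`, `q = -ν/(1-ν)`. Since `p > q` and
`p(p-1) = q(q-1) > 0`, the map `r ↦ r^p - r^q` is convex on `[1, ∞)`, so
`r - 1 - h (r^p - r^q)` is concave there and only the endpoints need checking:
it vanishes at `r = 1`, and equals `ν^{ν/(1-ν)} h ≥ 0` at `r = 1/ν`.
-/

open Real MeasureTheory Finset

set_option linter.unusedSectionVars false

noncomputable section

variable {ι : Type*} [Fintype ι] [DecidableEq ι]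

/-- The log-likelihood update function `J(y) = (1-ν)y + ln ν`. -/
def Jfun (ν y : ℝ) : ℝ := (1 - ν) * y + Real.log ν

/-- `h(ν) = exp(ν ln ν/(1-ν)) - exp(ln ν/(1-ν))`. -/
def hfun (ν : ℝ) : ℝ :=
  Real.exp (ν * Real.log ν / (1 - ν)) - Real.exp (Real.log ν / (1 - ν))

/-- `g(ν) = exp(ln ν/(1-ν)) (1/(ν+1) - ln ν/(1-ν))`. -/
def gfun (ν : ℝ) : ℝ :=
  Real.exp (Real.log ν / (1 - ν)) * (1 / (ν + 1) - Real.log ν / (1 - ν))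

/-- Kronecker delta `δ[a,x]` as a real number. -/
def kdelta (a x : ι) : ℝ := if x = a then 1 else 0

theorem univ_nonempty_of_card (hcard : 2 ≤ Fintype.card ι) :
    (Finset.univ : Finset ι).Nonempty := by
  rw [← Finset.card_pos]
  have : (Finset.univ : Finset ι).card = Fintype.card ι := rfl
  omega

theorem erase_nonempty_of_card (hcard : 2 ≤ Fintype.card ι) (a : ι) :
    ((Finset.univ : Finset ι).erase a).Nonempty := by
  rw [← Finset.card_pos, Finset.card_erase_of_mem (Finset.mem_univ a)]
  have : (Finset.univ : Finset ι).card = Fintype.card ι := rfl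
  omega

theorem pairs_nonempty_of_card (hcard : 2 ≤ Fintype.card ι) :
    ((Finset.univ : Finset (ι × ι)).filter fun p => p.1 ≠ p.2).Nonempty := by
  obtain ⟨a, b, hab⟩ := Fintype.exists_pair_of_one_lt_card (α := ι) (by omega)
  exact ⟨(a, b), by simp [hab]⟩

/-- `max_{â ≠ a} m[â]`. -/
def maxOther (hcard : 2 ≤ Fintype.card ι) (m : ι → ℝ) (a : ι) : ℝ :=
  ((Finset.univ : Finset ι).erase a).sup' (erase_nonempty_of_card hcard a) m

/-- `ξ(a; m)`. -/
def xi (ν : ℝ) (hcard : 2 ≤ Fintype.card ι) (m : ι → ℝ) (a : ι) : ℝ :=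
  if maxOther hcard m a - m a < Real.log ν then Real.exp (m a)
  else Real.exp (maxOther hcard m a)
    + hfun ν * Real.exp ((m a - ν * maxOther hcard m a) / (1 - ν))

/-- `min_{x_i ≠ x_j} (m[x_i] - ν m[x_j])`, over ordered pairs of distinct indices. -/
def minPair (ν : ℝ) (hcard : 2 ≤ Fintype.card ι) (m : ι → ℝ) : ℝ :=
  (((Finset.univ : Finset (ι × ι)).filter fun p => p.1 ≠ p.2).inf'
    (pairs_nonempty_of_card hcard)) (fun p => m p.1 - ν * m p.2)

/-- The feedback density `f(y | m, a) = b[a] ν e^{-νy} + (1-b[a]) e^{-y}`. -/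
def fdens (ν : ℝ) (m : ι → ℝ) (a : ι) (y : ℝ) : ℝ :=
  (Real.exp (m a) / ∑ l, Real.exp (m l)) * (ν * Real.exp (-ν * y))
    + (1 - Real.exp (m a) / ∑ l, Real.exp (m l)) * Real.exp (-y)

/-- Terminal value `V_L(m) = max_x exp(m[x]) / ∑_l exp(m[l])`. -/
def Vterm (hcard : 2 ≤ Fintype.card ι) (m : ι → ℝ) : ℝ :=
  ((Finset.univ : Finset ι).sup' (univ_nonempty_of_card hcard) fun x => Real.exp (m x))
    / ∑ l, Real.exp (m l)

lemma hfun_pos {ν : ℝ} (hν : ν ∈ Set.Ioo (0 : ℝ) 1) : 0 < hfun ν := by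
  obtain ⟨h0, h1⟩ := hν
  have hlog : log ν < 0 := log_neg h0 h1
  rw [hfun, sub_pos, exp_lt_exp]
  exact div_lt_div_of_pos_right (by nlinarith) (by linarith)

lemma convexOn_rpow_sub_rpow {p q : ℝ} (hqp : q ≤ p) (hp : 0 ≤ p * (p - 1))
    (hpq : q * (q - 1) = p * (p - 1)) :
    ConvexOn ℝ (Set.Ici 1) fun r : ℝ => r ^ p - r ^ q := by
  have hderiv (a b s t r : ℝ) (hr : r ≠ 0) :
      HasDerivAt (fun r : ℝ => a * r ^ s - b * r ^ t)
        (a * (s * r ^ (s - 1)) - b * (t * r ^ (t - 1))) r :=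
    ((hasDerivAt_rpow_const (Or.inl hr)).const_mul a).sub
      ((hasDerivAt_rpow_const (Or.inl hr)).const_mul b)
  have hr0 {r : ℝ} (hr : r ∈ interior (Set.Ici (1 : ℝ))) : r ≠ 0 := by
    rw [interior_Ici, Set.mem_Ioi] at hr; positivity
  refine convexOn_of_hasDerivWithinAt2_nonneg (convex_Ici 1)
    (f' := fun r => p * r ^ (p - 1) - q * r ^ (q - 1))
    (f'' := fun r => p * ((p - 1) * r ^ (p - 1 - 1)) - q * ((q - 1) * r ^ (q - 1 - 1)))
    (fun r hr => ?_) (fun r hr => ?_) (fun r hr => ?_) (fun r hr => ?_)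
  · have hr : r ≠ 0 := by rw [Set.mem_Ici] at hr; positivity
    simpa using (hderiv 1 1 p q r hr).continuousAt.continuousWithinAt
  · simpa using (hderiv 1 1 p q r (hr0 hr)).hasDerivWithinAt
  · exact (hderiv p q (p - 1) (q - 1) r (hr0 hr)).hasDerivWithinAt
  · rw [interior_Ici, Set.mem_Ioi] at hr
    have hmono : r ^ (q - 1 - 1) ≤ r ^ (p - 1 - 1) :=
      rpow_le_rpow_of_exponent_le hr.le (by linarith)
    rw [← mul_assoc, ← mul_assoc, hpq, ← mul_sub]
    exact mul_nonneg hp (sub_nonneg.mpr hmono)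

lemma inv_sub_hfun_mul_rpow_sub_rpow {ν : ℝ} (hν : ν ∈ Set.Ioo (0 : ℝ) 1) :
    ν⁻¹ - hfun ν * (ν⁻¹ ^ (1 / (1 - ν)) - ν⁻¹ ^ (-ν / (1 - ν))) =
      1 + exp (ν * log ν / (1 - ν)) * hfun ν := by
  have h0 : 0 < ν⁻¹ := inv_pos.mpr hν.1
  have h1ν : 1 - ν ≠ 0 := by linarith [hν.2]
  -- `hfun ν = a - b` with `a = ν ^ (ν / (1 - ν))`, `b = ν ^ (1 / (1 - ν))` and `a / b = ν⁻¹`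
  set a := exp (ν * log ν / (1 - ν))
  set b := exp (log ν / (1 - ν))
  have hpow_p : ν⁻¹ ^ (1 / (1 - ν)) = b⁻¹ := by
    rw [rpow_def_of_pos h0, log_inv, ← exp_neg]; congr 1; ring
  have hpow_q : ν⁻¹ ^ (-ν / (1 - ν)) = a := by
    rw [rpow_def_of_pos h0, log_inv]; congr 1; ring
  have hab : a * b⁻¹ = ν⁻¹ := by
    rw [← exp_neg, ← exp_add, ← exp_log h0, log_inv]; congr 1; field_simp; ring
  have hb : b * b⁻¹ = 1 := mul_inv_cancel₀ (exp_pos _).ne'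
  rw [hpow_p, hpow_q, ← hab, hfun]
  linear_combination hb

lemma hfun_mul_rpow_sub_rpow_le {ν r : ℝ} (hν : ν ∈ Set.Ioo (0 : ℝ) 1)
    (hr : r ∈ Set.Icc 1 ν⁻¹) :
    hfun ν * (r ^ (1 / (1 - ν)) - r ^ (-ν / (1 - ν))) ≤ r - 1 := by
  have h1ν : 0 < 1 - ν := by linarith [hν.2]
  have hconvex : ConvexOn ℝ (Set.Ici 1)
      fun r : ℝ => r ^ (1 / (1 - ν)) - r ^ (-ν / (1 - ν)) := by
    refine convexOn_rpow_sub_rpow ?_ ?_ ?_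
    · exact div_le_div_of_nonneg_right (by linarith [hν.1]) h1ν.le
    · have : 1 / (1 - ν) * (1 / (1 - ν) - 1) = ν / (1 - ν) ^ 2 := by field_simp; ring
      rw [this]; exact div_nonneg hν.1.le (sq_nonneg _)
    · field_simp; ring
  have hconcave : ConcaveOn ℝ (Set.Ici 1)
      fun r : ℝ => r - hfun ν * (r ^ (1 / (1 - ν)) - r ^ (-ν / (1 - ν))) :=
    (concaveOn_id (convex_Ici 1)).sub (hconvex.smul (hfun_pos hν).le)
  have hright : 1 ≤ ν⁻¹ - hfun ν * (ν⁻¹ ^ (1 / (1 - ν)) - ν⁻¹ ^ (-ν / (1 - ν))) := by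
    rw [inv_sub_hfun_mul_rpow_sub_rpow hν]
    exact le_add_of_nonneg_right (mul_pos (exp_pos _) (hfun_pos hν)).le
  have hmin := hconcave.min_le_of_mem_Icc Set.self_mem_Ici (hr.1.trans hr.2) hr
  simp only [one_rpow, sub_self, mul_zero, sub_zero] at hmin
  linarith [le_min le_rfl hright]

lemma exp_add_hfun_mul_exp_le {ν M N : ℝ} (hν : ν ∈ Set.Ioo (0 : ℝ) 1) (hNM : N ≤ M)
    (hlog : log ν ≤ N - M) :
    exp N + hfun ν * exp ((M - ν * N) / (1 - ν)) ≤
      exp M + hfun ν * exp ((N - ν * M) / (1 - ν)) := by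
  have h1ν : 1 - ν ≠ 0 := by linarith [hν.2]
  have hr : exp (M - N) ∈ Set.Icc 1 ν⁻¹ := by
    refine ⟨one_le_exp (by linarith), ?_⟩
    rw [← exp_log (inv_pos.mpr hν.1), log_inv]
    exact exp_le_exp.mpr (by linarith)
  have hkey := mul_le_mul_of_nonneg_left (hfun_mul_rpow_sub_rpow_le hν hr) (exp_pos N).le
  rw [← exp_mul, ← exp_mul] at hkey
  have e1 : exp N * exp ((M - N) * (1 / (1 - ν))) = exp ((M - ν * N) / (1 - ν)) := by
    rw [← exp_add]; congr 1; field_simp; ring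
  have e2 : exp N * exp ((M - N) * (-ν / (1 - ν))) = exp ((N - ν * M) / (1 - ν)) := by
    rw [← exp_add]; congr 1; field_simp; ring
  have e3 : exp N * exp (M - N) = exp M := by rw [← exp_add]; congr 1; ring
  linear_combination hkey - hfun ν * e1 + hfun ν * e2 + e3

lemma maxOther_eq_of_forall_le (hcard : 2 ≤ Fintype.card ι) {m : ι → ℝ} {a b : ι}
    (hba : b ≠ a) (hb : ∀ x, x ≠ a → m x ≤ m b) : maxOther hcard m a = m b :=
  le_antisymm (Finset.sup'_le _ _ fun x hx => hb x (Finset.ne_of_mem_erase hx))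
    (Finset.le_sup' m (Finset.mem_erase.mpr ⟨hba, Finset.mem_univ b⟩))

/-- `ξ(x₂;m) ≥ ξ(x₁;m)`. -/
theorem xi_first_le_xi_second
    (ν : ℝ) (hν : ν ∈ Set.Ioo (0:ℝ) 1)
    (hcard : 2 ≤ Fintype.card ι) (m : ι → ℝ)
    (x₁ x₂ : ι) (hx₁ : ∀ x, m x ≤ m x₁) (hne : x₂ ≠ x₁)
    (hx₂ : ∀ x, x ≠ x₁ → m x ≤ m x₂) :
    xi ν hcard m x₁ ≤ xi ν hcard m x₂ := by
  have hmax₁ : maxOther hcard m x₁ = m x₂ := maxOther_eq_of_forall_le hcard hne hx₂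
  have hmax₂ : maxOther hcard m x₂ = m x₁ :=
    maxOther_eq_of_forall_le hcard hne.symm fun x _ => hx₁ x
  have hno_gap : ¬ m x₁ - m x₂ < log ν := by linarith [hx₁ x₂, log_neg hν.1 hν.2]
  simp only [xi, hmax₁, hmax₂, if_neg hno_gap]
  split_ifs with hgap
  · exact le_add_of_nonneg_right (mul_pos (hfun_pos hν) (exp_pos _)).le
  · exact exp_add_hfun_mul_exp_le hν (hx₁ x₂) (not_lt.mp hgap)

end
end

section
/- Let ν ∈ (0,1), let ι be a finite index set with |ι| ≥ 2, fix a horizon L ≥ 1, and let V_k : (ι → ℝ) → ℝ for k = 0,…,L be defined by the backward Bellman recursion: V_L(m) = max_{x∈ι} exp(m[x])/Σ_{l∈ι} exp(m[l]) and, for 0 ≤ k < L, V_k(m) = max_{a∈ι} q_k(m,a) with q_k(m,a) = ∫₀^∞ V_{k+1}( m + J(y)·δ_a ) · f(y|m,a) dy (assume all these integrals exist). Then for every 0 ≤ k ≤ L−1, every m : ι → ℝ, and every a ∈ ι: q_k(m,a) ≥ ( ξ(a;m) + exp( ( min over ordered pairs of distinct indices (x_i,x_j) of ( m[x_i] − ν·m[x_j]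 ) ) / (1−ν) ) · h(ν) · Σ_{n=1}^{L−k−1} g(ν)^n ) / Σ_{l∈ι} exp(m[l]). -/
open Real MeasureTheory Finset

set_option linter.unusedSectionVars false

noncomputable section

variable {ι : Type*} [Fintype ι] [DecidableEq ι]

/-!
Conditioning on the feedback y of beam a moves the preferences to m' = m + J(y)·δ_a, and the
feedback density is f(y|m,a) = e^{-y} Σ_l e^{m'[l]} / Σ_l e^{m[l]}: the normaliser of the updated
belief cancels against the density. Backward induction then gives
V_{L-j}(m) ≥ (e^{max m} + c_j h(ν) e^{μ(m)/(1-ν)}) / Σ_l e^{m[l]}, with μ(m) the minimum over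
ordered pairs of m[x_i] − ν m[x_j] and c_j = Σ_{i<j} g(ν)^i. Under the update,
max m' = max(max_{x≠a} m[x], m[a] + J(y)) and μ(m') ≥ μ(m) + min(J(y), −νJ(y)); integrating the
exponentials of these against e^{-y} over y > 0 produces exactly ξ(a;m) and g(ν). To close the
induction, take for a any index other than an argmax of m: then
ξ(a;m) ≥ e^{max m} + h(ν) e^{μ(m)/(1-ν)}.
-/

lemma integrableOn_Ioi_of_eqOn_exp {f : ℝ → ℝ} {s t c a : ℝ} (hf : Continuous f) (ha : a < 0)
    (h : Set.EqOn f (fun y => c * exp (a * y)) (Set.Ioi t)) : IntegrableOn f (Set.Ioi s) :=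
  ((hf.integrableOn_Ioc (a := s) (b := t)).union
    (IntegrableOn.congr_fun ((integrableOn_exp_mul_Ioi ha t).const_mul c) h.symm
      measurableSet_Ioi)).mono_set Set.Ioi_subset_Ioc_union_Ioi

lemma integral_Ioi_eq_intervalIntegral_add {f : ℝ → ℝ} {s t c a : ℝ} (hf : Continuous f)
    (ha : a < 0) (h : Set.EqOn f (fun y => c * exp (a * y)) (Set.Ioi t)) :
    ∫ y in Set.Ioi s, f y = (∫ y in s..t, f y) + c * (-exp (a * t) / a) := by
  rw [← intervalIntegral.integral_interval_add_Ioi' (hf.intervalIntegrable s t)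
      (integrableOn_Ioi_of_eqOn_exp hf ha h), setIntegral_congr_fun measurableSet_Ioi h,
    integral_const_mul, integral_exp_mul_Ioi ha]

@[fun_prop]
lemma continuous_Jfun (ν : ℝ) : Continuous (Jfun ν) := by
  unfold Jfun; fun_prop

section Integrals

variable {ν : ℝ}

lemma exp_max_Jfun_mul_exp_neg_eqOn (hν0 : 0 < ν) (hν1 : ν < 1) (M μ : ℝ) :
    Set.EqOn (fun y => exp (max M (μ + Jfun ν y)) * exp (-y))
      (fun y => exp μ * ν * exp (-ν * y)) (Set.Ioi ((M - μ - log ν) / (1 - ν))) := by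
  intro y hy
  have hty : (M - μ - log ν) / (1 - ν) < y := hy
  rw [div_lt_iff₀ (by linarith)] at hty
  simp only
  rw [max_eq_right (by rw [Jfun]; linarith), Jfun, ← exp_log hν0, ← exp_add, ← exp_add,
    ← exp_add, exp_log hν0]
  ring_nf

lemma integrableOn_exp_max_Jfun_mul_exp_neg (hν0 : 0 < ν) (hν1 : ν < 1) (M μ : ℝ) :
    IntegrableOn (fun y => exp (max M (μ + Jfun ν y)) * exp (-y)) (Set.Ioi 0) :=
  integrableOn_Ioi_of_eqOn_exp (by fun_prop) (by linarith)
    (exp_max_Jfun_mul_exp_neg_eqOn hν0 hν1 M μ)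

lemma integral_exp_max_Jfun_mul_exp_neg (hν0 : 0 < ν) (hν1 : ν < 1) (M μ : ℝ) :
    ∫ y in Set.Ioi 0, exp (max M (μ + Jfun ν y)) * exp (-y)
      = if M - μ < log ν then exp μ
        else exp M + hfun ν * exp ((μ - ν * M) / (1 - ν)) := by
  have h1ν : 0 < 1 - ν := by linarith
  set t := (M - μ - log ν) / (1 - ν) with ht
  rw [integral_Ioi_eq_intervalIntegral_add (by fun_prop) (by linarith)
    ((exp_max_Jfun_mul_exp_neg_eqOn hν0 hν1 M μ).mono (Set.Ioi_subset_Ioi (le_max_right 0 t)))]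
  split_ifs with hM
  · have ht0 : t < 0 := div_neg_of_neg_of_pos (by linarith) h1ν
    rw [max_eq_left ht0.le, intervalIntegral.integral_same]
    field_simp
    simp
  · have ht0 : 0 ≤ t := div_nonneg (by linarith) h1ν.le
    have hlo : Set.EqOn (fun y => exp (max M (μ + Jfun ν y)) * exp (-y))
        (fun y => exp M * exp (-y)) (Set.uIcc 0 t) := by
      intro y hy
      rw [Set.uIcc_of_le ht0] at hy
      have hyt := hy.2
      rw [ht, le_div_iff₀ h1ν] at hyt
      simp only
      rw [max_eq_left (by rw [Jfun]; linarith)]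
    rw [max_eq_right ht0, intervalIntegral.integral_congr hlo, intervalIntegral.integral_const_mul,
      intervalIntegral.integral_comp_neg (fun y => exp y), integral_exp]
    have e1 : exp M * exp (-t) = exp (log ν / (1 - ν)) * exp ((μ - ν * M) / (1 - ν)) := by
      rw [← exp_add, ← exp_add, ht]; congr 1; field_simp; ring
    have e2 : exp μ * exp (-ν * t) = exp (ν * log ν / (1 - ν)) * exp ((μ - ν * M) / (1 - ν)) := by
      rw [← exp_add, ← exp_add, ht]; congr 1; field_simp; ring
    have e3 : exp μ * ν * (-exp (-ν * t) / -ν) = exp μ * exp (-ν * t) := by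
      field_simp
    rw [neg_zero, exp_zero, e3, hfun]
    linear_combination e2 - e1

lemma exp_min_Jfun_mul_exp_neg_eqOn (hν0 : 0 < ν) (hν1 : ν < 1) :
    Set.EqOn (fun y => exp (min (Jfun ν y) (-(ν * Jfun ν y)) / (1 - ν)) * exp (-y))
      (fun y => exp (-(ν * log ν / (1 - ν))) * exp (-(1 + ν) * y))
      (Set.Ioi (-log ν / (1 - ν))) := by
  intro y hy
  have hty : -log ν / (1 - ν) < y := hy
  rw [div_lt_iff₀ (by linarith)] at hty
  have hJ : 0 < Jfun ν y := by rw [Jfun]; linarith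
  simp only
  rw [min_eq_right (by nlinarith), ← exp_add, ← exp_add, Jfun]
  congr 1
  field_simp [show 1 - ν ≠ 0 by linarith]
  ring

lemma integrableOn_exp_min_Jfun_mul_exp_neg (hν0 : 0 < ν) (hν1 : ν < 1) :
    IntegrableOn (fun y => exp (min (Jfun ν y) (-(ν * Jfun ν y)) / (1 - ν)) * exp (-y))
      (Set.Ioi 0) :=
  integrableOn_Ioi_of_eqOn_exp (by fun_prop) (by linarith) (exp_min_Jfun_mul_exp_neg_eqOn hν0 hν1)

lemma integral_exp_min_Jfun_mul_exp_neg (hν0 : 0 < ν) (hν1 : ν < 1) :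
    ∫ y in Set.Ioi 0, exp (min (Jfun ν y) (-(ν * Jfun ν y)) / (1 - ν)) * exp (-y) = gfun ν := by
  have h1ν : 0 < 1 - ν := by linarith
  set t := -log ν / (1 - ν) with ht
  have ht0 : 0 ≤ t := div_nonneg (by linarith [log_neg hν0 hν1]) h1ν.le
  have hlo : Set.EqOn (fun y => exp (min (Jfun ν y) (-(ν * Jfun ν y)) / (1 - ν)) * exp (-y))
      (fun _ => exp (log ν / (1 - ν))) (Set.uIcc 0 t) := by
    intro y hy
    rw [Set.uIcc_of_le ht0] at hy
    have hyt := hy.2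
    rw [ht, le_div_iff₀ h1ν] at hyt
    have hJ : Jfun ν y ≤ 0 := by rw [Jfun]; linarith
    simp only
    rw [min_eq_left (by nlinarith), ← exp_add, Jfun]
    congr 1; field_simp; ring
  rw [integral_Ioi_eq_intervalIntegral_add (by fun_prop) (by linarith)
      (exp_min_Jfun_mul_exp_neg_eqOn hν0 hν1), intervalIntegral.integral_congr hlo,
    intervalIntegral.integral_const, smul_eq_mul, mul_div_assoc', mul_neg, ← exp_add, gfun]
  have e : -(ν * log ν / (1 - ν)) + -(1 + ν) * t = log ν / (1 - ν) := by
    rw [ht]; field_simp; ring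
  rw [e, ht]
  field_simp
  ring

end Integrals

lemma hfun_pos_s16 {ν : ℝ} (hν0 : 0 < ν) (hν1 : ν < 1) : 0 < hfun ν := by
  have hlog := log_neg hν0 hν1
  rw [hfun, sub_pos, exp_lt_exp]
  exact div_lt_div_of_pos_right (by nlinarith) (by linarith)

lemma gfun_pos {ν : ℝ} (hν0 : 0 < ν) (hν1 : ν < 1) : 0 < gfun ν := by
  have : log ν / (1 - ν) < 0 := div_neg_of_neg_of_pos (log_neg hν0 hν1) (by linarith)
  have : 0 < 1 / (ν + 1) := by positivity
  exact mul_pos (exp_pos _) (by linarith)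

section Beliefs

variable {ν : ℝ} (hcard : 2 ≤ Fintype.card ι)

lemma sup'_eq_max_maxOther (m : ι → ℝ) (a : ι) :
    univ.sup' (univ_nonempty_of_card hcard) m = max (m a) (maxOther hcard m a) := by
  rw [maxOther, ← sup'_insert (erase_nonempty_of_card hcard a)]
  exact sup'_congr _ (insert_erase (mem_univ a)).symm fun _ _ => rfl

lemma maxOther_add_kdelta (m : ι → ℝ) (a : ι) (c : ℝ) :
    maxOther hcard (fun x => m x + c * kdelta a x) a = maxOther hcard m a :=
  sup'_congr _ rfl fun x hx => by simp [kdelta, (mem_erase.mp hx).1]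

lemma sup'_add_kdelta (m : ι → ℝ) (a : ι) (c : ℝ) :
    univ.sup' (univ_nonempty_of_card hcard) (fun x => m x + c * kdelta a x)
      = max (maxOther hcard m a) (m a + c) := by
  rw [sup'_eq_max_maxOther hcard _ a, maxOther_add_kdelta, max_comm]
  simp [kdelta]

lemma minPair_le (m : ι → ℝ) {x y : ι} (hxy : x ≠ y) : minPair ν hcard m ≤ m x - ν * m y :=
  inf'_le (fun p : ι × ι => m p.1 - ν * m p.2) (b := (x, y)) (by simp [hxy])

lemma minPair_add_kdelta (hν : 0 ≤ ν) (m : ι → ℝ) (a : ι) (c : ℝ) :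
    minPair ν hcard m + min c (-(ν * c)) ≤ minPair ν hcard (fun x => m x + c * kdelta a x) := by
  refine le_inf' _ _ fun ⟨i, j⟩ hij => ?_
  have hij : i ≠ j := (mem_filter.mp hij).2
  have hm := minPair_le (ν := ν) hcard m hij
  have hc₁ := min_le_left c (-(ν * c))
  have hc₂ := min_le_right c (-(ν * c))
  have hc₀ : min c (-(ν * c)) ≤ 0 := by
    rcases le_total c 0 with hc | hc
    · linarith
    · nlinarith
  by_cases hia : i = a
  · subst hia
    simp only [kdelta, ↓reduceIte, mul_one, Ne.symm hij, mul_zero, add_zero, ge_iff_le]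
    linarith
  · by_cases hja : j = a
    · subst hja
      simp only [kdelta, hia, ↓reduceIte, mul_zero, add_zero, mul_one, ge_iff_le]
      linarith
    · simp only [kdelta, hia, hja, ↓reduceIte, mul_zero, add_zero, ge_iff_le]
      linarith

lemma exists_le_xi (hν0 : 0 < ν) (hν1 : ν < 1) (m : ι → ℝ) :
    ∃ a, exp (univ.sup' (univ_nonempty_of_card hcard) m)
        + hfun ν * exp (minPair ν hcard m / (1 - ν)) ≤ xi ν hcard m a := by
  obtain ⟨w, -, hw⟩ := exists_mem_eq_sup' (univ_nonempty_of_card hcard) m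
  obtain ⟨v, hvw⟩ := Fintype.exists_ne_of_one_lt_card (by omega) w
  have hmv : m v ≤ m w := hw ▸ le_sup' m (mem_univ v)
  have hmax : maxOther hcard m v = m w := le_antisymm
    (hw ▸ sup'_le _ _ fun x _ => le_sup' m (mem_univ x))
    (le_sup' m (mem_erase.mpr ⟨hvw.symm, mem_univ w⟩))
  refine ⟨v, ?_⟩
  rw [xi, if_neg (by rw [hmax]; linarith [log_neg hν0 hν1]), hmax, hw]
  have hdiv : minPair ν hcard m / (1 - ν) ≤ (m v - ν * m w) / (1 - ν) :=
    div_le_div_of_nonneg_right (minPair_le hcard m hvw) (by linarith)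
  exact add_le_add_right (mul_le_mul_of_nonneg_left (exp_le_exp.2 hdiv) (hfun_pos_s16 hν0 hν1).le) _

end Beliefs

lemma sum_exp_add_kdelta (m : ι → ℝ) (a : ι) (c : ℝ) :
    ∑ l, exp (m l + c * kdelta a l) = ∑ l, exp (m l) + exp (m a) * (exp c - 1) := by
  have h : ∀ l, exp (m l + c * kdelta a l)
      = exp (m l) + if l = a then exp (m a) * (exp c - 1) else 0 := by
    intro l
    by_cases hl : l = a
    · simp only [hl, kdelta, ↓reduceIte, mul_one, exp_add]; ring
    · simp [kdelta, hl]
  simp only [h, sum_add_distrib, sum_ite_eq', mem_univ, if_true]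

lemma fdens_eq {ν : ℝ} (hν0 : 0 < ν) (m : ι → ℝ) (a : ι) (y : ℝ) :
    fdens ν m a y
      = (∑ l, exp (m l + Jfun ν y * kdelta a l)) * exp (-y) / ∑ l, exp (m l) := by
  have hS : 0 < ∑ l, exp (m l) := sum_pos (fun l _ => exp_pos (m l)) ⟨a, mem_univ a⟩
  have he : exp (Jfun ν y) * exp (-y) = ν * exp (-(ν * y)) := by
    rw [Jfun, exp_add, exp_log hν0, mul_right_comm, ← exp_add]; ring_nf
  rw [sum_exp_add_kdelta, fdens, neg_mul]
  field_simp
  linear_combination -exp (m a) * he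

lemma fdens_nonneg {ν : ℝ} (hν0 : 0 < ν) (m : ι → ℝ) (a : ι) (y : ℝ) : 0 ≤ fdens ν m a y := by
  rw [fdens_eq hν0]; positivity

def valueLowerBound (ν : ℝ) (hcard : 2 ≤ Fintype.card ι) (c : ℝ) (m : ι → ℝ) : ℝ :=
  (exp (univ.sup' (univ_nonempty_of_card hcard) m)
    + c * hfun ν * exp (minPair ν hcard m / (1 - ν))) / ∑ l, exp (m l)

section ValueBound

variable {ν : ℝ} (hcard : 2 ≤ Fintype.card ι)

lemma valueLowerBound_zero (m : ι → ℝ) : valueLowerBound ν hcard 0 m = Vterm hcard m := by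
  rw [valueLowerBound, Vterm, zero_mul, zero_mul, add_zero,
    apply_sup'_eq_sup'_comp _ exp fun x y => exp_monotone.map_max]
  rfl

lemma le_valueLowerBound_mul_fdens (hν0 : 0 < ν) (hν1 : ν < 1) {c : ℝ} (hc : 0 ≤ c)
    (m : ι → ℝ) (a : ι) (y : ℝ) :
    (exp (max (maxOther hcard m a) (m a + Jfun ν y)) * exp (-y)
        + c * hfun ν * exp (minPair ν hcard m / (1 - ν))
          * (exp (min (Jfun ν y) (-(ν * Jfun ν y)) / (1 - ν)) * exp (-y)))
        / ∑ l, exp (m l)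
      ≤ valueLowerBound ν hcard c (fun x => m x + Jfun ν y * kdelta a x) * fdens ν m a y := by
  have hS' : 0 < ∑ l, exp (m l + Jfun ν y * kdelta a l) :=
    sum_pos (fun l _ => exp_pos _) (univ_nonempty_of_card hcard)
  have hpair : exp (minPair ν hcard m / (1 - ν)) * exp (min (Jfun ν y) (-(ν * Jfun ν y)) / (1 - ν))
      ≤ exp (minPair ν hcard (fun x => m x + Jfun ν y * kdelta a x) / (1 - ν)) := by
    rw [← exp_add, ← add_div, exp_le_exp]
    exact div_le_div_of_nonneg_right (minPair_add_kdelta hcard hν0.le m a _) (by linarith)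
  have hch : 0 ≤ c * hfun ν := mul_nonneg hc (hfun_pos_s16 hν0 hν1).le
  have hrhs : valueLowerBound ν hcard c (fun x => m x + Jfun ν y * kdelta a x) * fdens ν m a y
      = (exp (max (maxOther hcard m a) (m a + Jfun ν y))
          + c * hfun ν * exp (minPair ν hcard (fun x => m x + Jfun ν y * kdelta a x) / (1 - ν)))
          * exp (-y) / ∑ l, exp (m l) := by
    rw [valueLowerBound, fdens_eq hν0, sup'_add_kdelta hcard]
    field_simp
  rw [hrhs]
  gcongr ?_ / _
  linear_combination (exp (-y)) * (mul_le_mul_of_nonneg_left hpair hch)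

lemma le_integral_of_valueLowerBound_le (hν0 : 0 < ν) (hν1 : ν < 1) {c : ℝ} (hc : 0 ≤ c)
    {W : (ι → ℝ) → ℝ} (hW : ∀ m, valueLowerBound ν hcard c m ≤ W m) (m : ι → ℝ) (a : ι)
    (hint : IntegrableOn (fun y => W (fun x => m x + Jfun ν y * kdelta a x) * fdens ν m a y)
      (Set.Ioi 0)) :
    (xi ν hcard m a + exp (minPair ν hcard m / (1 - ν)) * hfun ν * (gfun ν * c))
        / ∑ l, exp (m l)
      ≤ ∫ y in Set.Ioi 0, W (fun x => m x + Jfun ν y * kdelta a x) * fdens ν m a y := by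
  have hmax := integrableOn_exp_max_Jfun_mul_exp_neg hν0 hν1 (maxOther hcard m a) (m a)
  have hmin := (integrableOn_exp_min_Jfun_mul_exp_neg hν0 hν1).const_mul
    (c * hfun ν * exp (minPair ν hcard m / (1 - ν)))
  calc (xi ν hcard m a + exp (minPair ν hcard m / (1 - ν)) * hfun ν * (gfun ν * c))
        / ∑ l, exp (m l)
      = ∫ y in Set.Ioi 0, (exp (max (maxOther hcard m a) (m a + Jfun ν y)) * exp (-y)
          + c * hfun ν * exp (minPair ν hcard m / (1 - ν))
            * (exp (min (Jfun ν y) (-(ν * Jfun ν y)) / (1 - ν)) * exp (-y)))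
          / ∑ l, exp (m l) := by
        rw [integral_div, integral_add hmax hmin, integral_const_mul,
          integral_exp_max_Jfun_mul_exp_neg hν0 hν1, integral_exp_min_Jfun_mul_exp_neg hν0 hν1,
          xi]
        ring
    _ ≤ _ := setIntegral_mono_on ((hmax.add hmin).div_const _) hint measurableSet_Ioi
        fun y _ => (le_valueLowerBound_mul_fdens hcard hν0 hν1 hc m a y).trans
          (mul_le_mul_of_nonneg_right (hW _) (fdens_nonneg hν0 m a y))

lemma valueLowerBound_le_sup' (hν0 : 0 < ν) (hν1 : ν < 1) (c : ℝ) (m : ι → ℝ) {Q : ι → ℝ}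
    (hQ : ∀ a, (xi ν hcard m a + exp (minPair ν hcard m / (1 - ν)) * hfun ν * (gfun ν * c))
        / ∑ l, exp (m l) ≤ Q a) :
    valueLowerBound ν hcard (gfun ν * c + 1) m ≤ univ.sup' (univ_nonempty_of_card hcard) Q := by
  obtain ⟨a, ha⟩ := exists_le_xi hcard hν0 hν1 m
  refine le_trans ?_ ((hQ a).trans (le_sup' Q (mem_univ a)))
  rw [valueLowerBound]
  gcongr ?_ / _
  linear_combination ha

end ValueBound

lemma sum_Icc_one_pow {R : Type*} [Semiring R] (x : R) (N : ℕ) :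
    ∑ n ∈ Icc 1 N, x ^ n = x * ∑ i ∈ range N, x ^ i := by
  rw [mul_sum, ← Ico_add_one_right_eq_Icc, sum_Ico_eq_sum_range]
  simp [pow_succ', add_comm]

/-- lower bound on the Q-function (Theorem 1 of the paper, lower bound). -/
theorem Qfun_lower_bound
    (ν : ℝ) (hν : ν ∈ Set.Ioo (0:ℝ) 1)
    (hcard : 2 ≤ Fintype.card ι)
    (L : ℕ) (hL : 1 ≤ L)
    (V : ℕ → (ι → ℝ) → ℝ) (q : ℕ → (ι → ℝ) → ι → ℝ)
    (hVL : ∀ m : ι → ℝ, V L m = Vterm hcard m)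
    (hq : ∀ k, k < L → ∀ (m : ι → ℝ) (a : ι),
      q k m a = ∫ y in Set.Ioi (0:ℝ),
        V (k + 1) (fun x => m x + Jfun ν y * kdelta a x) * fdens ν m a y)
    (hV : ∀ k, k < L → ∀ m : ι → ℝ,
      V k m = (Finset.univ : Finset ι).sup' (univ_nonempty_of_card hcard) (q k m))
    (hint : ∀ k, k < L → ∀ (m : ι → ℝ) (a : ι),
      MeasureTheory.IntegrableOn
        (fun y => V (k + 1) (fun x => m x + Jfun ν y * kdelta a x) * fdens ν m a y)
        (Set.Ioi (0:ℝ))) :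
    ∀ k, k ≤ L - 1 → ∀ (m : ι → ℝ) (a : ι),
      q k m a ≥
        (xi ν hcard m a
          + Real.exp (minPair ν hcard m / (1 - ν)) * hfun ν
            * ∑ n ∈ Finset.Icc 1 (L - k - 1), gfun ν ^ n)
          / ∑ l, Real.exp (m l) := by
  obtain ⟨hν0, hν1⟩ := hν
  have hgeom : ∀ j, 0 ≤ ∑ i ∈ range j, gfun ν ^ i := fun j =>
    sum_nonneg fun i _ => pow_nonneg (gfun_pos hν0 hν1).le i
  have hbound : ∀ j ≤ L, ∀ m,
      valueLowerBound ν hcard (∑ i ∈ range j, gfun ν ^ i) m ≤ V (L - j) m := by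
    intro j
    induction j with
    | zero => intro _ m; rw [sum_range_zero, valueLowerBound_zero, Nat.sub_zero, hVL]
    | succ j ih =>
      intro hj m
      have hk : L - (j + 1) < L := by omega
      rw [geom_sum_succ, hV _ hk]
      refine valueLowerBound_le_sup' hcard hν0 hν1 _ m fun a => ?_
      rw [hq _ hk]
      refine le_integral_of_valueLowerBound_le hcard hν0 hν1 (hgeom j) (fun m' => ?_) m a
        (hint _ hk m a)
      rw [show L - (j + 1) + 1 = L - j by omega]
      exact ih (by omega) m'
  intro k hk m a
  have hkL : k < L := by omega
  rw [ge_iff_le, hq k hkL, sum_Icc_one_pow]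
  refine le_integral_of_valueLowerBound_le hcard hν0 hν1 (hgeom _) (fun m' => ?_) m a
    (hint k hkL m a)
  rw [show k + 1 = L - (L - k - 1) by omega]
  exact hbound _ (by omega) m'
end
end
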